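/- For all n ≥ 1: t(4n) = 2t(n-1) + a(n), t(4n+1) = 2t(n-1), t(4n+2) = t(n) + t(n-1), and for all n ≥ 0: t(4n+3) = 2t(n). -/

import Mathlib

def rs : ℕ → ℤ
  | 0 => 1
  | (n+1) =>
    if (n+1) % 2 = 0 then rs ((n+1)/2)
    else (-1)^((n+1)/2) * rs ((n+1)/2)
decreasing_by all_goals exact Nat.div_lt_self (Nat.succ_pos n) (by norm_num)

def s (n : ℕ) : ℤ := ∑ i ∈ Finset.range (n+1), rs i

def t (n : ℕ) : ℤ := ∑ i ∈ Finset.range (n+1), (-1)^i * rs i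

/-!
Split the alternating sum into blocks of four consecutive terms. Since `a(4k) = a(4k+1) = a(k)`
and `a(4k+2) = -a(4k+3) = (-1)^k a(k)`, the block starting at `4k` contributes `2 (-1)^k a(k)`,
so `t(4n+3) = 2 t(n)`. The other three identities follow by removing the last one, two or three
terms of `t(4n+3)` and using `t(n) = t(n-1) + (-1)^n a(n)`.
-/

theorem Finset.sum_range_mul_eq_sum_sum {M : Type*} [AddCommMonoid M] (f : ℕ → M) (m n : ℕ) :
    ∑ i ∈ range (m * n), f i = ∑ k ∈ range m, ∑ j ∈ range n, f (k * n + j) := by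
  induction m with
  | zero => simp
  | succ m ih => rw [Nat.succ_mul, sum_range_add, ih, sum_range_succ]

theorem neg_one_pow_four_mul_add {R : Type*} [Monoid R] [HasDistribNeg R] (n j : ℕ) :
    (-1 : R) ^ (4 * n + j) = (-1) ^ j := by
  rw [pow_add, pow_mul]
  norm_num

theorem rs_two_mul (n : ℕ) : rs (2 * n) = rs n := by
  cases n with
  | zero => rfl
  | succ m =>
    rw [show 2 * (m + 1) = (2 * m + 1) + 1 by ring, rs, if_pos (by omega),
      show (2 * m + 1 + 1) / 2 = m + 1 by omega]

theorem rs_two_mul_add_one (n : ℕ) : rs (2 * n + 1) = (-1) ^ n * rs n := by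
  rw [rs, if_neg (by omega), show (2 * n + 1) / 2 = n by omega]

theorem rs_four_mul (n : ℕ) : rs (4 * n) = rs n := by
  rw [show 4 * n = 2 * (2 * n) by ring, rs_two_mul, rs_two_mul]

theorem rs_four_mul_add_one (n : ℕ) : rs (4 * n + 1) = rs n := by
  rw [show 4 * n + 1 = 2 * (2 * n) + 1 by ring, rs_two_mul_add_one, rs_two_mul, pow_mul]
  norm_num

theorem rs_four_mul_add_two (n : ℕ) : rs (4 * n + 2) = (-1) ^ n * rs n := by
  rw [show 4 * n + 2 = 2 * (2 * n + 1) by ring, rs_two_mul, rs_two_mul_add_one]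

theorem rs_four_mul_add_three (n : ℕ) : rs (4 * n + 3) = -((-1) ^ n * rs n) := by
  rw [show 4 * n + 3 = 2 * (2 * n + 1) + 1 by ring, rs_two_mul_add_one, rs_two_mul_add_one,
    pow_succ, pow_mul]
  norm_num

theorem sum_range_four_neg_one_pow_mul_rs (k : ℕ) :
    ∑ j ∈ Finset.range 4, (-1) ^ (k * 4 + j) * rs (k * 4 + j) = 2 * ((-1) ^ k * rs k) := by
  simp only [Finset.sum_range_succ, Finset.sum_range_zero, mul_comm k 4,
    neg_one_pow_four_mul_add, add_zero, rs_four_mul, rs_four_mul_add_one, rs_four_mul_add_two,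
    rs_four_mul_add_three]
  ring

theorem t_succ (n : ℕ) : t (n + 1) = t n + (-1) ^ (n + 1) * rs (n + 1) :=
  Finset.sum_range_succ _ _

theorem t_four_mul_add_three (n : ℕ) : t (4 * n + 3) = 2 * t n := by
  rw [t, show 4 * n + 3 + 1 = (n + 1) * 4 by ring, Finset.sum_range_mul_eq_sum_sum, t,
    Finset.mul_sum]
  exact Finset.sum_congr rfl fun k _ => sum_range_four_neg_one_pow_mul_rs k

theorem t_four_mul_add_two (n : ℕ) : t (4 * n + 2) = 2 * t n - (-1) ^ n * rs n := by
  have h : t (4 * n + 3) = t (4 * n + 2) + (-1) ^ (4 * n + 3) * rs (4 * n + 3) := t_succ _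
  rw [neg_one_pow_four_mul_add, rs_four_mul_add_three, t_four_mul_add_three] at h
  linear_combination -h

theorem t_four_mul_add_one (n : ℕ) : t (4 * n + 1) = 2 * t n - 2 * ((-1) ^ n * rs n) := by
  have h : t (4 * n + 2) = t (4 * n + 1) + (-1) ^ (4 * n + 2) * rs (4 * n + 2) := t_succ _
  rw [neg_one_pow_four_mul_add, rs_four_mul_add_two, t_four_mul_add_two] at h
  linear_combination -h

theorem t_four_mul (n : ℕ) : t (4 * n) = 2 * t n - 2 * ((-1) ^ n * rs n) + rs n := by
  have h : t (4 * n + 1) = t (4 * n) + (-1) ^ (4 * n + 1) * rs (4 * n + 1) := t_succ _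
  rw [neg_one_pow_four_mul_add, rs_four_mul_add_one, t_four_mul_add_one] at h
  linear_combination -h

theorem stmt4 : (∀ n : ℕ, 1 ≤ n →
      t (4*n) = 2 * t (n-1) + rs n ∧
      t (4*n+1) = 2 * t (n-1) ∧
      t (4*n+2) = t n + t (n-1)) ∧
    (∀ n : ℕ, t (4*n+3) = 2 * t n) := by
  refine ⟨fun n hn => ?_, t_four_mul_add_three⟩
  obtain ⟨m, rfl⟩ := Nat.exists_eq_add_of_le' hn
  rw [Nat.add_sub_cancel, t_four_mul, t_four_mul_add_one, t_four_mul_add_two, t_succ]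
  exact ⟨by ring, by ring, by ring⟩
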